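/- arXiv:2209.12785 — 2 statements merged into one kernel-verified Lean document; each statement's English description precedes it below -/
import Mathlib

section
/- The diversity order of XP-HARQ with K = 2 equals 2: if P1 = P2 = γ̄·σ², then as γ̄ → ∞, −log(P_out,2)/log(γ̄) → 2. -/
/-!
With rate `r = 1/γ̄` for both gains, the outage region contains the box
`(0, 2^R₁ - 1) × (0, 2^R₂ - 1)` and, on the nonnegative quadrant, lies inside the box
`[0, 2^R₁ - 1] × [0, 2^(R₁+R₂) - 1]`. An exponential law gives an interval `[0, t]` the mass
`1 - e^{-rt}`, which lies between `rt·e^{-rt}` and `rt`, so both boxes have probability of order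
`r² = γ̄^{-2}`. Hence `P_out,2 = Θ(γ̄^{-2})`, and `-log P_out,2 / log γ̄ → 2`.
-/

open MeasureTheory ProbabilityTheory Real Filter

/-- The XP-HARQ outage probability after 2 rounds,
`P_out,2 = Pr(I₁ < R₁ ∧ I₁ + I₂ < R₁ + R₂)` with `I_k = log₂(1 + γ_k)`, where
`γ₁, γ₂` are independent exponential random variables with rates `σ²/P₁, σ²/P₂`,
realized canonically on `ℝ × ℝ` with the product of exponential measures. -/
noncomputable def poutTwo (σ2 P1 P2 R1 R2 : ℝ) : ℝ :=
  (((expMeasure (σ2 / P1)).prod (expMeasure (σ2 / P2)))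
    {p : ℝ × ℝ | Real.logb 2 (1 + p.1) < R1 ∧
      Real.logb 2 (1 + p.1) + Real.logb 2 (1 + p.2) < R1 + R2}).toReal

open Set Topology

theorem Real.mul_exp_neg_le_one_sub_exp_neg (x : ℝ) : x * exp (-x) ≤ 1 - exp (-x) := by
  have hx : exp (-x) * exp x = 1 := by rw [← exp_add, neg_add_cancel, exp_zero]
  nlinarith [add_one_le_exp x, exp_pos (-x)]

theorem Real.exp_neg_one_mul_le_mul_exp_neg {x : ℝ} (hx₀ : 0 ≤ x) (hx₁ : x ≤ 1) :
    exp (-1) * x ≤ x * exp (-x) := by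
  rw [mul_comm]
  exact mul_le_mul_of_nonneg_left (exp_le_exp.2 (neg_le_neg hx₁)) hx₀

theorem tendsto_neg_log_div_log_of_le_of_le {f : ℝ → ℝ} {d c₁ c₂ : ℝ} (hc₁ : 0 < c₁)
    (hf : ∀ᶠ x in atTop, c₁ * x ^ (-d) ≤ f x ∧ f x ≤ c₂ * x ^ (-d)) :
    Tendsto (fun x ↦ -log (f x) / log x) atTop (𝓝 d) := by
  have hlim (c : ℝ) : Tendsto (fun x ↦ d - log c / log x) atTop (𝓝 d) := by
    simpa using tendsto_const_nhds.sub (tendsto_const_nhds.div_atTop tendsto_log_atTop)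
  have hsandwich : ∀ᶠ x in atTop, d - log c₂ / log x ≤ -log (f x) / log x ∧
      -log (f x) / log x ≤ d - log c₁ / log x := by
    filter_upwards [hf, eventually_gt_atTop 1] with x ⟨hlo, hhi⟩ hx
    have hlogx : 0 < log x := log_pos hx
    have hpow : 0 < x ^ (-d) := rpow_pos_of_pos (by linarith) _
    have hlog_bound {c : ℝ} (hc : 0 < c) : log (c * x ^ (-d)) = log c - d * log x := by
      rw [log_mul hc.ne' hpow.ne', log_rpow (by linarith)]; ring
    have hc₂ : 0 < c₂ := pos_of_mul_pos_left ((mul_pos hc₁ hpow).trans_le (hlo.trans hhi)) hpow.le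
    have h₁ := log_le_log (by positivity) hlo
    have h₂ := log_le_log ((mul_pos hc₁ hpow).trans_le hlo) hhi
    rw [hlog_bound hc₁] at h₁
    rw [hlog_bound hc₂] at h₂
    have hrepr (c : ℝ) : d - log c / log x = (-(log c - d * log x)) / log x := by
      field_simp; ring
    rw [hrepr, hrepr]
    constructor <;> gcongr
  exact tendsto_of_tendsto_of_tendsto_of_le_of_le' (hlim c₂) (hlim c₁)
    (hsandwich.mono fun _ h ↦ h.1) (hsandwich.mono fun _ h ↦ h.2)

namespace ProbabilityTheory

instance nullSingletonClass_expMeasure (r : ℝ) : NullSingletonClass (expMeasure r) := by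
  unfold expMeasure gammaMeasure; infer_instance

variable {r : ℝ}

theorem expMeasure_Iic (hr : 0 < r) (t : ℝ) :
    expMeasure r (Iic t) = ENNReal.ofReal (1 - exp (-(r * t))) := by
  have := isProbabilityMeasure_expMeasure hr
  rw [← ofReal_cdf, cdf_expMeasure_eq hr]
  split_ifs with ht
  · rfl
  · rw [ENNReal.ofReal_zero, eq_comm, ENNReal.ofReal_eq_zero, sub_nonpos, one_le_exp_iff]
    nlinarith

theorem expMeasure_Iic_zero (hr : 0 < r) : expMeasure r (Iic 0) = 0 := by
  simp [expMeasure_Iic hr]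

theorem ae_nonneg_expMeasure (hr : 0 < r) : ∀ᵐ x ∂expMeasure r, 0 ≤ x :=
  measure_mono_null (fun x (hx : ¬ 0 ≤ x) ↦ mem_Iic.2 (not_le.1 hx).le) (expMeasure_Iic_zero hr)

theorem expMeasure_Ioo_zero (hr : 0 < r) (t : ℝ) :
    expMeasure r (Ioo 0 t) = expMeasure r (Iic t) := by
  have hIoc : Ioc 0 t = Iic t \ Iic 0 := by ext; simp [and_comm]
  rw [measure_congr Ioo_ae_eq_Ioc, hIoc, measure_sdiff_null (expMeasure_Iic_zero hr)]

theorem expMeasure_Iic_le (hr : 0 < r) (t : ℝ) :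
    expMeasure r (Iic t) ≤ ENNReal.ofReal (r * t) := by
  rw [expMeasure_Iic hr]
  exact ENNReal.ofReal_le_ofReal (by linarith [one_sub_le_exp_neg (r * t)])

theorem le_expMeasure_Iic (hr : 0 < r) (t : ℝ) :
    ENNReal.ofReal (r * t * exp (-(r * t))) ≤ expMeasure r (Iic t) := by
  rw [expMeasure_Iic hr]
  exact ENNReal.ofReal_le_ofReal (mul_exp_neg_le_one_sub_exp_neg _)

end ProbabilityTheory

def outageRegion (R1 R2 : ℝ) : Set (ℝ × ℝ) :=
  {p | logb 2 (1 + p.1) < R1 ∧ logb 2 (1 + p.1) + logb 2 (1 + p.2) < R1 + R2}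

theorem poutTwo_eq (σ2 P1 P2 R1 R2 : ℝ) :
    poutTwo σ2 P1 P2 R1 R2 =
      ((expMeasure (σ2 / P1)).prod (expMeasure (σ2 / P2))).real (outageRegion R1 R2) :=
  rfl

theorem Ioo_prod_Ioo_subset_outageRegion (R1 R2 : ℝ) :
    Ioo 0 (2 ^ R1 - 1) ×ˢ Ioo 0 (2 ^ R2 - 1) ⊆ outageRegion R1 R2 := by
  rintro ⟨x, y⟩ ⟨⟨hx0, hx⟩, ⟨hy0, hy⟩⟩
  have hx1 : 0 < 1 + x := by linarith
  have hy1 : 0 < 1 + y := by linarith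
  refine ⟨(logb_lt_iff_lt_rpow one_lt_two hx1).2 (by linarith), ?_⟩
  rw [← logb_mul hx1.ne' hy1.ne', logb_lt_iff_lt_rpow one_lt_two (by positivity),
    rpow_add two_pos]
  exact mul_lt_mul'' (by linarith) (by linarith) hx1.le hy1.le

theorem mem_Iic_prod_Iic_of_mem_outageRegion {R1 R2 : ℝ} {p : ℝ × ℝ}
    (hp : 0 ≤ p.1 ∧ 0 ≤ p.2) (hout : p ∈ outageRegion R1 R2) :
    p ∈ Iic (2 ^ R1 - 1) ×ˢ Iic (2 ^ (R1 + R2) - 1) := by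
  obtain ⟨hx, hy⟩ := hp
  obtain ⟨h₁, h₂⟩ := hout
  have hlog₁ : 0 ≤ logb 2 (1 + p.1) := logb_nonneg one_lt_two (by linarith)
  have hx' := (logb_lt_iff_lt_rpow one_lt_two (by linarith)).1 h₁
  have hy' := (logb_lt_iff_lt_rpow one_lt_two (by linarith)).1
    (by linarith : logb 2 (1 + p.2) < R1 + R2)
  exact ⟨by simp only [mem_Iic]; linarith, by simp only [mem_Iic]; linarith⟩

section ProductOfExponentials

variable {r₁ r₂ : ℝ}

theorem prod_expMeasure_real_outageRegion_le (hr₁ : 0 < r₁) (hr₂ : 0 < r₂) {R1 R2 : ℝ}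
    (hR1 : 0 ≤ R1) (hR : 0 ≤ R1 + R2) :
    ((expMeasure r₁).prod (expMeasure r₂)).real (outageRegion R1 R2) ≤
      r₁ * (2 ^ R1 - 1) * (r₂ * (2 ^ (R1 + R2) - 1)) := by
  have := isProbabilityMeasure_expMeasure hr₂
  -- `logb` is junk at nonpositive arguments; the gains are nonnegative almost surely.
  have hnonneg : ∀ᵐ p ∂(expMeasure r₁).prod (expMeasure r₂), 0 ≤ p.1 ∧ 0 ≤ p.2 :=
    (Measure.quasiMeasurePreserving_fst.ae (ae_nonneg_expMeasure hr₁)).and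
      (Measure.quasiMeasurePreserving_snd.ae (ae_nonneg_expMeasure hr₂))
  have ha : 0 ≤ r₁ * (2 ^ R1 - 1) := mul_nonneg hr₁.le (by linarith [one_le_rpow one_le_two hR1])
  refine ENNReal.toReal_le_of_le_ofReal (mul_nonneg ha (mul_nonneg hr₂.le
    (by linarith [one_le_rpow one_le_two hR]))) ?_
  calc ((expMeasure r₁).prod (expMeasure r₂)) (outageRegion R1 R2)
      ≤ ((expMeasure r₁).prod (expMeasure r₂)) (Iic (2 ^ R1 - 1) ×ˢ Iic (2 ^ (R1 + R2) - 1)) :=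
        measure_mono_ae (hnonneg.mono fun _ hp hout ↦
          mem_Iic_prod_Iic_of_mem_outageRegion hp hout)
    _ ≤ ENNReal.ofReal (r₁ * (2 ^ R1 - 1)) * ENNReal.ofReal (r₂ * (2 ^ (R1 + R2) - 1)) := by
        rw [Measure.prod_prod]
        exact mul_le_mul' (expMeasure_Iic_le hr₁ _) (expMeasure_Iic_le hr₂ _)
    _ = _ := (ENNReal.ofReal_mul ha).symm

theorem le_prod_expMeasure_real_outageRegion (hr₁ : 0 < r₁) (hr₂ : 0 < r₂) {R1 R2 : ℝ}
    (hR1 : 0 ≤ R1) :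
    r₁ * (2 ^ R1 - 1) * exp (-(r₁ * (2 ^ R1 - 1))) *
        (r₂ * (2 ^ R2 - 1) * exp (-(r₂ * (2 ^ R2 - 1)))) ≤
      ((expMeasure r₁).prod (expMeasure r₂)).real (outageRegion R1 R2) := by
  have ha : 0 ≤ r₁ * (2 ^ R1 - 1) * exp (-(r₁ * (2 ^ R1 - 1))) :=
    mul_nonneg (mul_nonneg hr₁.le (by linarith [one_le_rpow one_le_two hR1])) (exp_pos _).le
  have := isProbabilityMeasure_expMeasure hr₁
  have := isProbabilityMeasure_expMeasure hr₂
  refine (ENNReal.ofReal_le_iff_le_toReal (measure_ne_top _ _)).1 ?_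
  calc ENNReal.ofReal _
      = ENNReal.ofReal (r₁ * (2 ^ R1 - 1) * exp (-(r₁ * (2 ^ R1 - 1)))) *
          ENNReal.ofReal (r₂ * (2 ^ R2 - 1) * exp (-(r₂ * (2 ^ R2 - 1)))) :=
        ENNReal.ofReal_mul ha
    _ ≤ expMeasure r₁ (Ioo 0 (2 ^ R1 - 1)) * expMeasure r₂ (Ioo 0 (2 ^ R2 - 1)) := by
        rw [expMeasure_Ioo_zero hr₁, expMeasure_Ioo_zero hr₂]
        exact mul_le_mul' (le_expMeasure_Iic hr₁ _) (le_expMeasure_Iic hr₂ _)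
    _ = ((expMeasure r₁).prod (expMeasure r₂)) (Ioo 0 (2 ^ R1 - 1) ×ˢ Ioo 0 (2 ^ R2 - 1)) :=
        (Measure.prod_prod _ _).symm
    _ ≤ _ := measure_mono (Ioo_prod_Ioo_subset_outageRegion R1 R2)

end ProductOfExponentials

/-- The diversity order of XP-HARQ with `K = 2` equals 2:
with `P₁ = P₂ = γ̄·σ²`, as `γ̄ → ∞`, `−log(P_out,2)/log(γ̄) → 2`. -/
theorem diversity_order_K2
    (σ2 R1 R2 : ℝ) (hσ : 0 < σ2) (hR1 : 0 < R1) (hR2 : 0 < R2) :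
    Filter.Tendsto
      (fun snr : ℝ =>
        - Real.log (poutTwo σ2 (snr * σ2) (snr * σ2) R1 R2) / Real.log snr)
      Filter.atTop (nhds 2) := by
  set a := (2 : ℝ) ^ R1 - 1
  set b := (2 : ℝ) ^ R2 - 1
  have ha : 0 < a := sub_pos.2 (one_lt_rpow one_lt_two hR1)
  have hb : 0 < b := sub_pos.2 (one_lt_rpow one_lt_two hR2)
  refine tendsto_neg_log_div_log_of_le_of_le (c₁ := exp (-1) * a * (exp (-1) * b))
    (c₂ := a * (2 ^ (R1 + R2) - 1)) (by positivity) ?_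
  filter_upwards [eventually_ge_atTop a, eventually_ge_atTop b, eventually_gt_atTop 0]
    with snr hsa hsb hsnr
  have hr : 0 < snr⁻¹ := inv_pos.2 hsnr
  have hrate : σ2 / (snr * σ2) = snr⁻¹ := by field_simp
  have hpow : snr ^ (-2 : ℝ) = snr⁻¹ * snr⁻¹ := by
    rw [rpow_neg hsnr.le, rpow_two, sq, mul_inv]
  have hsmall {t : ℝ} (ht : t ≤ snr) : snr⁻¹ * t ≤ 1 := by
    rw [inv_mul_le_iff₀ hsnr, mul_one]; exact ht
  rw [poutTwo_eq, hrate, hpow]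
  constructor
  · refine le_trans ?_ (le_prod_expMeasure_real_outageRegion hr hr hR1.le)
    calc exp (-1) * a * (exp (-1) * b) * (snr⁻¹ * snr⁻¹)
        = exp (-1) * (snr⁻¹ * a) * (exp (-1) * (snr⁻¹ * b)) := by ring
      _ ≤ _ := mul_le_mul
          (exp_neg_one_mul_le_mul_exp_neg (by positivity) (hsmall hsa))
          (exp_neg_one_mul_le_mul_exp_neg (by positivity) (hsmall hsb))
          (by positivity) (by positivity)
  · refine (prod_expMeasure_real_outageRegion_le hr hr hR1.le (by linarith)).trans_eq ?_
    ring
end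

section
/- With x_0 = 1, the XP-HARQ outage probability admits the iterated-integral representation P_out,K = ∏_{k=1}^K (σ²/P_k)·e^{σ²/P_k} · ∫_{x_0}^{2^{R_1^Σ}} ⋯ ∫_{x_{K−2}}^{2^{R_{K−1}^Σ}} ∫_{x_{K−1}}^{2^{R_K^Σ}} exp(−(σ²/P_K)·x_K/x_{K−1}) · ∏_{k=1}^{K−1} (1/x_k)·exp(−(σ²/P_k)·x_k/x_{k−1}) dx_K dx_{K−1} ⋯ dx_1, i.e., the probability that the nested conditions x_{k−1} < x_k < 2^{R_k^Σ} hold for x_k = ∏_{l=1}^k (1+γ_l) equals this nested integral of the transformed joint density. -/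
open MeasureTheory ProbabilityTheory Real Filter

/-- The nested iterated integral appearing in the representation of `P_out,K`:
`nestedInt σ2 P RΣ K j` is the function `x_{K-j-1} ↦ F_{K-j}(x_{K-j-1})` where
`F_K(y) = ∫_y^{2^{RΣ K}} exp(−(σ²/P_K)·z/y) dz` and, for `1 ≤ k ≤ K−1`,
`F_k(y) = ∫_y^{2^{RΣ k}} (1/z)·exp(−(σ²/P_k)·z/y)·F_{k+1}(z) dz`. -/
noncomputable def nestedInt (σ2 : ℝ) (P Rs : ℕ → ℝ) (K : ℕ) : ℕ → ℝ → ℝ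
  | 0, y => ∫ z in y..((2:ℝ) ^ Rs K), Real.exp (-(σ2 / P K) * z / y)
  | (j + 1), y =>
      ∫ z in y..((2:ℝ) ^ Rs (K - (j + 1))),
        (1 / z) * Real.exp (-(σ2 / P (K - (j + 1))) * z / y)
          * nestedInt σ2 P Rs K j z

/-!
Write `x_m = y ∏_{l = k}^{m} (1 + γ_l)` for the accumulated gain of a walk started at `y` before
round `k`, and let `p_k(y)` be the probability that `x_k, …, x_K` stay below the thresholds
`2^{R_k^Σ}, …, 2^{R_K^Σ}`. The gains are independent exponentials, so
conditioning on `γ_k` and substituting `z = y (1 + γ_k)` turns the density `r e^{-r x}` of `γ_k`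
(with `r = σ²/P_k`) into `(r e^r / y) e^{-r z / y}` on `(y, 2^{R_k^Σ})`:
`y p_k(y) = r e^r ∫_y^{2^{R_k^Σ}} (1/z) e^{-r z / y} (z p_{k+1}(z)) dz`, with `p_{K+1} = 1`.
This is, up to the constants `r e^r`, the recursion defining the nested integral for `y p_k(y)`,
and the theorem is its instance `k = 1`, `y = 1`.
-/

open Finset

theorem Fin.partialProd_eq_prod_Icc {M : Type*} [CommMonoid M] {n : ℕ} (g : ℕ → M)
    (j : Fin (n + 1)) :
    Fin.partialProd (fun i : Fin n => g (i + 1)) j = ∏ l ∈ Icc 1 (j : ℕ), g l := by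
  induction j using Fin.induction with
  | zero => simp
  | succ j ih =>
    rw [Fin.partialProd_succ, ih, Fin.val_succ, Fin.val_castSucc, prod_Icc_succ_top (by omega)]

theorem Real.sum_logb_lt_iff_prod_lt_rpow {ι : Type*} {s : Finset ι} {a : ι → ℝ} {b c : ℝ}
    (hb : 1 < b) (ha : ∀ i ∈ s, 0 < a i) :
    ∑ i ∈ s, logb b (a i) < c ↔ ∏ i ∈ s, a i < b ^ c := by
  rw [← Real.logb_prod s a fun i hi => (ha i hi).ne']
  exact Real.logb_lt_iff_lt_rpow hb (prod_pos ha)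

theorem Fin.measurable_partialProd {M : Type*} [Monoid M] [MeasurableSpace M] [MeasurableMul₂ M]
    {n : ℕ} (j : Fin (n + 1)) : Measurable fun f : Fin n → M => Fin.partialProd f j := by
  induction j using Fin.induction with
  | zero => simp only [Fin.partialProd_zero, measurable_const]
  | succ j ih =>
    simp only [Fin.partialProd_succ]
    exact ih.mul (measurable_pi_apply j)

theorem ae_pos_expMeasure (r : ℝ) : ∀ᵐ x ∂expMeasure r, 0 < x := by
  have h : expMeasure r (Set.Iic 0) = 0 := by
    rw [expMeasure, gammaMeasure, withDensity_apply _ measurableSet_Iic,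
      ← setLIntegral_congr Iio_ae_eq_Iic]
    exact lintegral_exponentialPDF_of_nonpos le_rfl
  exact (measure_eq_zero_iff_ae_notMem.1 h).mono fun x hx => not_le.1 hx

theorem toReal_exponentialPDF {r : ℝ} (hr : 0 < r) (x : ℝ) :
    (exponentialPDF r x).toReal = (Set.Ici 0).indicator (fun x => r * exp (-(r * x))) x := by
  rw [exponentialPDF_eq, ENNReal.toReal_ofReal (by positivity), Set.indicator_apply]
  rfl

theorem setIntegral_expMeasure_Iio {r a : ℝ} (hr : 0 < r) (ha : 0 ≤ a) (g : ℝ → ℝ) :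
    ∫ x in Set.Iio a, g x ∂expMeasure r = r * ∫ x in (0 : ℝ)..a, exp (-(r * x)) * g x := by
  have hpdf : Measurable (exponentialPDF r) :=
    (measurable_exponentialPDFReal r).ennreal_ofReal
  have hexp : expMeasure r = volume.withDensity (exponentialPDF r) := rfl
  rw [hexp, setIntegral_withDensity_eq_setIntegral_toReal_smul hpdf
    (ae_of_all _ fun _ => ENNReal.ofReal_lt_top) g measurableSet_Iio]
  simp_rw [toReal_exponentialPDF hr, smul_eq_mul, ← Set.indicator_mul_left]
  rw [setIntegral_indicator measurableSet_Ici, Set.Iio_inter_Ici, integral_Ico_eq_integral_Ioc,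
    ← intervalIntegral.integral_of_le ha, ← intervalIntegral.integral_const_mul]
  simp only [mul_assoc]

theorem aemeasurable_of_map_eq_expMeasure {Ω : Type*} [MeasurableSpace Ω] {μ : Measure Ω}
    {X : Ω → ℝ} {r : ℝ} (hr : 0 < r) (hX : μ.map X = expMeasure r) : AEMeasurable X μ :=
  .of_map_ne_zero <| by rw [hX]; exact (isProbabilityMeasure_expMeasure hr).ne_zero

theorem ae_pos_of_map_eq_expMeasure {Ω : Type*} [MeasurableSpace Ω] {μ : Measure Ω}
    {X : Ω → ℝ} {r : ℝ} (hr : 0 < r) (hX : μ.map X = expMeasure r) : ∀ᵐ ω ∂μ, 0 < X ω :=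
  ae_of_ae_map (aemeasurable_of_map_eq_expMeasure hr hX) (hX ▸ ae_pos_expMeasure r)

/-- `v i` is the gain of the `(i + 1)`-st round and `y * partialProd … m.succ` is `x_{m+1}`. -/
def outageSet {n : ℕ} (T : Fin n → ℝ) (y : ℝ) : Set (Fin n → ℝ) :=
  {v | ∀ m : Fin n, y * Fin.partialProd (fun i => 1 + v i) m.succ < T m}

noncomputable def outageProb {n : ℕ} (ν : Fin n → Measure ℝ) (T : Fin n → ℝ) (y : ℝ) : ℝ :=
  (Measure.pi ν (outageSet T y)).toReal

theorem measurableSet_outageSet {n : ℕ} (T : Fin n → ℝ) (y : ℝ) :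
    MeasurableSet (outageSet T y) := by
  simp only [outageSet, Set.ofPred_forall]
  refine MeasurableSet.iInter fun m => measurableSet_lt ?_ measurable_const
  exact ((Fin.measurable_partialProd m.succ).comp
    (measurable_pi_lambda _ fun i => (measurable_pi_apply i).const_add 1)).const_mul y

theorem mem_outageSet_succ {n : ℕ} {T : Fin (n + 1) → ℝ} {y : ℝ} {v : Fin (n + 1) → ℝ} :
    v ∈ outageSet T y ↔
      y * (1 + v 0) < T 0 ∧ Fin.tail v ∈ outageSet (Fin.tail T) (y * (1 + v 0)) := by
  simp only [outageSet, Set.mem_ofPred_eq, Fin.forall_fin_succ, Fin.partialProd_succ',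
    Fin.partialProd_zero, mul_one, mul_assoc]
  rfl

theorem outageProb_zero (ν : Fin 0 → Measure ℝ) (T : Fin 0 → ℝ) (y : ℝ) :
    outageProb ν T y = 1 := by
  have huniv : outageSet T y = Set.univ := Set.eq_univ_of_forall fun _ m => m.elim0
  rw [outageProb, huniv, Measure.pi_of_empty, measure_univ, ENNReal.toReal_one]

theorem outageProb_succ_eq_integral {n : ℕ} (ν : Fin (n + 1) → Measure ℝ)
    [∀ i, IsProbabilityMeasure (ν i)] (T : Fin (n + 1) → ℝ) (y : ℝ) :
    outageProb ν T y = ∫ x, {x | y * (1 + x) < T 0}.indicator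
      (fun x => outageProb (fun i => ν i.succ) (Fin.tail T) (y * (1 + x))) x ∂ν 0 := by
  set e := MeasurableEquiv.piFinSuccAbove (fun _ => ℝ) 0
  set B := e.symm ⁻¹' outageSet T y
  have hB : MeasurableSet B := e.symm.measurable (measurableSet_outageSet T y)
  have hsection : ∀ x, Prod.mk x ⁻¹' B =
      {w | y * (1 + x) < T 0 ∧ w ∈ outageSet (Fin.tail T) (y * (1 + x))} := by
    intro x
    ext w
    simp [B, e, Fin.consEquiv, mem_outageSet_succ (v := Fin.cons x w)]
  have hmp := measurePreserving_piFinSuccAbove ν 0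
  simp only [Fin.succAbove_zero] at hmp
  have hpre : e ⁻¹' B = outageSet T y := by ext; simp [B]
  rw [outageProb, ← hpre, hmp.measure_preimage hB.nullMeasurableSet, Measure.prod_apply hB,
    ← integral_toReal (measurable_measure_prodMk_left hB).aemeasurable
      (ae_of_all _ fun _ => measure_lt_top _ _)]
  congr 1 with x
  by_cases hx : y * (1 + x) < T 0 <;> simp [hsection, hx, outageProb]

theorem outageProb_succ_of_expMeasure {n : ℕ} {ν : Fin (n + 1) → Measure ℝ}
    [∀ i, IsProbabilityMeasure (ν i)] {r : ℝ} (hr : 0 < r) (h0 : ν 0 = expMeasure r)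
    {T : Fin (n + 1) → ℝ} {y : ℝ} (hy : 0 < y) (hyT : y ≤ T 0) :
    outageProb ν T y = r * exp r / y *
      ∫ z in y..T 0, exp (-r * z / y) * outageProb (fun i => ν i.succ) (Fin.tail T) z := by
  set F := fun z => exp (-r * z / y) * outageProb (fun i => ν i.succ) (Fin.tail T) z
  set a := T 0 / y - 1
  have hset : {x | y * (1 + x) < T 0} = Set.Iio a := by
    ext x
    simp only [Set.mem_ofPred_eq, Set.mem_Iio, a, lt_sub_iff_add_lt, lt_div_iff₀ hy, add_comm x,
      mul_comm]
  have ha : 0 ≤ a := by rw [sub_nonneg, one_le_div hy]; exact hyT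
  have hintegrand : ∀ x,
      exp (-(r * x)) * outageProb (fun i => ν i.succ) (Fin.tail T) (y * (1 + x)) =
        exp r * F (y + y * x) := by
    intro x
    simp only [F, mul_add, mul_one, ← mul_assoc, ← exp_add]
    congr 2
    field_simp
    ring
  have hsubst : ∫ z in y..T 0, F z = y * ∫ x in (0 : ℝ)..a, F (y + y * x) := by
    rw [← smul_eq_mul, intervalIntegral.smul_integral_comp_add_mul, mul_zero, add_zero, mul_sub,
      mul_div_cancel₀ _ hy.ne', mul_one, add_sub_cancel]
  rw [outageProb_succ_eq_integral, hset, integral_indicator measurableSet_Iio, h0,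
    setIntegral_expMeasure_Iio hr ha, hsubst]
  simp_rw [hintegrand]
  rw [intervalIntegral.integral_const_mul]
  field_simp

theorem prod_mul_nestedInt_eq_outageProb {σ2 : ℝ} {P Rs : ℕ → ℝ} (j : ℕ) {k K : ℕ}
    (hK : k + j = K) (hrate : ∀ m ∈ Icc k K, 0 < σ2 / P m)
    (hRs : ∀ m ∈ Ico k K, Rs m ≤ Rs (m + 1)) {y : ℝ} (hy : 0 < y) (hyk : y ≤ 2 ^ Rs k) :
    (∏ m ∈ Icc k K, σ2 / P m * exp (σ2 / P m)) * nestedInt σ2 P Rs K j y =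
      y * outageProb (fun i : Fin (j + 1) => expMeasure (σ2 / P (i + k)))
        (fun i => 2 ^ Rs (i + k)) y := by
  induction j generalizing k y with
  | zero =>
    subst hK
    have hk : 0 < σ2 / P k := hrate k (by simp)
    have : ∀ i : Fin 1, IsProbabilityMeasure (expMeasure (σ2 / P (i + k))) :=
      fun _ => isProbabilityMeasure_expMeasure (by simpa using hk)
    rw [outageProb_succ_of_expMeasure hk (by simp) hy (by simpa using hyk)]
    simp only [add_zero, Icc_self, prod_singleton, nestedInt, neg_mul, Fin.val_eq_zero, zero_add,
      outageProb_zero, mul_one]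
    field_simp
  | succ j ih =>
    have hk : 0 < σ2 / P k := hrate k (mem_Icc.2 ⟨le_rfl, by omega⟩)
    have : ∀ i : Fin (j + 2), IsProbabilityMeasure (expMeasure (σ2 / P (i + k))) :=
      fun i => isProbabilityMeasure_expMeasure (hrate _ (mem_Icc.2 ⟨by omega, by omega⟩))
    set C := ∏ m ∈ Icc (k + 1) K, σ2 / P m * exp (σ2 / P m)
    set Q := outageProb (fun i => expMeasure (σ2 / P ((i.succ : Fin (j + 2)) + k)))
      (Fin.tail fun i : Fin (j + 2) => (2 : ℝ) ^ Rs (i + k))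
    have hshift : ∀ i : Fin (j + 1), (i.succ : ℕ) + k = i + (k + 1) := fun i => by
      rw [Fin.val_succ]; omega
    have hnext : ∀ z, 0 < z → z ≤ 2 ^ Rs k → C * nestedInt σ2 P Rs K j z = z * Q z := by
      intro z hz hzk
      simp only [Q, Fin.tail_def, hshift]
      refine ih (by omega) (fun m hm => hrate m ?_) (fun m hm => hRs m ?_) hz ?_
      · rw [mem_Icc] at hm ⊢; omega
      · rw [mem_Ico] at hm ⊢; omega
      · exact hzk.trans
          (rpow_le_rpow_of_exponent_le one_le_two (hRs k (mem_Ico.2 ⟨le_rfl, by omega⟩)))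
    have hintegrand : ∀ z ∈ Set.uIcc y (2 ^ Rs k),
        C * (1 / z * exp (-(σ2 / P k) * z / y) * nestedInt σ2 P Rs K j z) =
          exp (-(σ2 / P k) * z / y) * Q z := by
      intro z hz
      rw [Set.uIcc_of_le hyk] at hz
      have hz0 : 0 < z := hy.trans_le hz.1
      calc _ = 1 / z * exp (-(σ2 / P k) * z / y) * (C * nestedInt σ2 P Rs K j z) := by ring
        _ = _ := by rw [hnext z hz0 hz.2]; field_simp
    rw [outageProb_succ_of_expMeasure hk (by simp) hy (by simpa using hyk), nestedInt,
      show K - (j + 1) = k by omega, ← insert_Icc_add_one_left_eq_Icc (by omega : k ≤ K),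
      prod_insert (by simp), Fin.val_zero, zero_add, mul_assoc,
      ← intervalIntegral.integral_const_mul, intervalIntegral.integral_congr hintegrand]
    field_simp
    rfl

theorem forall_sum_logb_lt_iff_mem_outageSet {K : ℕ} {a S : ℕ → ℝ}
    (ha : ∀ l ∈ Icc 1 K, 0 < 1 + a l) :
    (∀ k ∈ Icc 1 K, ∑ l ∈ Icc 1 k, logb 2 (1 + a l) < S k) ↔
      (fun i : Fin K => a (i + 1)) ∈ outageSet (fun i => 2 ^ S (i + 1)) 1 := by
  have hIcc : ∀ p : ℕ → Prop, (∀ k ∈ Icc 1 K, p k) ↔ ∀ m : Fin K, p (m + 1) := fun p =>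
    ⟨fun h m => h _ (by simp), fun h k hk => by
      simpa [Nat.sub_add_cancel (mem_Icc.1 hk).1] using h ⟨k - 1, by rw [mem_Icc] at hk; omega⟩⟩
  rw [hIcc]
  refine forall_congr' fun m => ?_
  rw [one_mul, Fin.partialProd_eq_prod_Icc (fun l => 1 + a l), Fin.val_succ]
  exact Real.sum_logb_lt_iff_prod_lt_rpow one_lt_two fun l hl =>
    ha l (Icc_subset_Icc le_rfl (by omega) hl)

theorem setOf_forall_sum_logb_lt_ae_eq_preimage_outageSet {Ω : Type*} [MeasurableSpace Ω]
    {μ : Measure Ω} {K : ℕ} {γ : ℕ → Ω → ℝ} {S : ℕ → ℝ}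
    (hγ : ∀ l ∈ Icc 1 K, ∀ᵐ ω ∂μ, 0 < γ l ω) :
    {ω | ∀ k ∈ Icc 1 K, ∑ l ∈ Icc 1 k, logb 2 (1 + γ l ω) < S k} =ᵐ[μ]
      (fun ω (i : Fin K) => γ (i + 1) ω) ⁻¹' outageSet (fun i => 2 ^ S (i + 1)) 1 := by
  filter_upwards [(eventually_all_finset _).2 hγ] with ω hω
  exact propext (forall_sum_logb_lt_iff_mem_outageSet fun l hl => by linarith [hω l hl])

theorem outage_iterated_integral_general
    {Ω : Type*} [MeasurableSpace Ω] (μ : Measure Ω)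
    (K : ℕ) (hK : 2 ≤ K) (σ2 : ℝ) (hσ : 0 < σ2)
    (P R : ℕ → ℝ) (hP : ∀ k ∈ Finset.Icc 1 K, 0 < P k)
    (hR : ∀ k ∈ Finset.Icc 1 K, 0 < R k)
    (γ : ℕ → Ω → ℝ)
    (hind : iIndepFun (fun i : Fin K => γ (i.1 + 1)) μ)
    (hdist : ∀ k ∈ Finset.Icc 1 K, Measure.map (γ k) μ = expMeasure (σ2 / P k)) :
    (μ {ω | ∀ k ∈ Finset.Icc 1 K,
        ∑ l ∈ Finset.Icc 1 k, Real.logb 2 (1 + γ l ω)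
          < ∑ l ∈ Finset.Icc 1 k, R l}).toReal
      = (∏ k ∈ Finset.Icc 1 K, (σ2 / P k) * Real.exp (σ2 / P k))
          * nestedInt σ2 P (fun m => ∑ l ∈ Finset.Icc 1 m, R l) K (K - 1) 1 := by
  obtain ⟨n, rfl⟩ : ∃ n, K = n + 1 := ⟨K - 1, by omega⟩
  have hrate : ∀ k ∈ Icc 1 (n + 1), 0 < σ2 / P k := fun k hk => div_pos hσ (hP k hk)
  have hγ : ∀ k ∈ Icc 1 (n + 1), AEMeasurable (γ k) μ := fun k hk =>
    aemeasurable_of_map_eq_expMeasure (hrate k hk) (hdist k hk)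
  have hmem : ∀ i : Fin (n + 1), (i : ℕ) + 1 ∈ Icc 1 (n + 1) := fun i =>
    mem_Icc.2 ⟨by omega, by omega⟩
  have hlaw : μ.map (fun ω (i : Fin (n + 1)) => γ (i + 1) ω) =
      Measure.pi fun i : Fin (n + 1) => expMeasure (σ2 / P (i + 1)) := by
    rw [hind.map_fun_eq_pi_map fun i => hγ _ (hmem i)]
    exact congrArg Measure.pi (funext fun i => hdist _ (hmem i))
  have hRs : ∀ m ∈ Ico 1 (n + 1), ∑ l ∈ Icc 1 m, R l ≤ ∑ l ∈ Icc 1 (m + 1), R l := by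
    intro m hm
    rw [sum_Icc_succ_top (by omega)]
    linarith [hR (m + 1) (by rw [mem_Ico] at hm; rw [mem_Icc]; omega)]
  have h1 : (1 : ℝ) ≤ 2 ^ ∑ l ∈ Icc 1 1, R l :=
    one_le_rpow one_le_two (by simpa using (hR 1 (by simp)).le)
  rw [measure_congr (setOf_forall_sum_logb_lt_ae_eq_preimage_outageSet fun l hl =>
      ae_pos_of_map_eq_expMeasure (hrate l hl) (hdist l hl)), ← Measure.map_apply_of_aemeasurable
      (aemeasurable_pi_lambda _ fun i => hγ _ (hmem i)) (measurableSet_outageSet _ _), hlaw,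
    Nat.add_sub_cancel, prod_mul_nestedInt_eq_outageProb n (add_comm 1 n) hrate hRs one_pos h1,
    one_mul, ← outageProb]

/-- With `x₀ = 1`, the XP-HARQ outage probability
`P_out,K = Pr(∀ k ∈ {1,…,K}, Σ_{l=1}^k log₂(1+γ_l) < R_k^Σ)` admits the
iterated-integral representation
`P_out,K = ∏_{k=1}^K (σ²/P_k)·e^{σ²/P_k} ·
  ∫_{x₀}^{2^{R₁^Σ}} ⋯ ∫_{x_{K−2}}^{2^{R_{K−1}^Σ}} ∫_{x_{K−1}}^{2^{R_K^Σ}}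
    e^{−(σ²/P_K)x_K/x_{K−1}} ∏_{k=1}^{K−1} (1/x_k)·e^{−(σ²/P_k)x_k/x_{k−1}}
    dx_K ⋯ dx_1`. -/
theorem outage_iterated_integral
    {Ω : Type*} [MeasurableSpace Ω] (μ : Measure Ω) [IsProbabilityMeasure μ]
    (K : ℕ) (hK : 2 ≤ K) (σ2 : ℝ) (hσ : 0 < σ2)
    (P R : ℕ → ℝ) (hP : ∀ k ∈ Finset.Icc 1 K, 0 < P k)
    (hR : ∀ k ∈ Finset.Icc 1 K, 0 < R k)
    (γ : ℕ → Ω → ℝ) (hmeas : ∀ k ∈ Finset.Icc 1 K, Measurable (γ k))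
    (hind : iIndepFun (fun i : Fin K => γ (i.1 + 1)) μ)
    (hdist : ∀ k ∈ Finset.Icc 1 K, Measure.map (γ k) μ = expMeasure (σ2 / P k)) :
    (μ {ω | ∀ k ∈ Finset.Icc 1 K,
        ∑ l ∈ Finset.Icc 1 k, Real.logb 2 (1 + γ l ω)
          < ∑ l ∈ Finset.Icc 1 k, R l}).toReal
      = (∏ k ∈ Finset.Icc 1 K, (σ2 / P k) * Real.exp (σ2 / P k))
          * nestedInt σ2 P (fun m => ∑ l ∈ Finset.Icc 1 m, R l) K (K - 1) 1 :=
  outage_iterated_integral_general μ K hK σ2 hσ P R hP hR γ hind hdist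
end
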